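/- Let n > 1, k > 1, and let E be an irreflexive relation on Fin n that is strongly connected (∀ i j, Relation.ReflTransGen E i j). Let V := {(m, i, j) : Fin k × Fin n × Fin n // i = j ∨ E i j} be the set of allowed entry positions. Then there exists a nonzero multivariate polynomial P ∈ MvPolynomial V ℂ such that for every tuple A : Fin k → Matrix (Fin n) (Fin n) ℂ supported on the pattern E (i.e. A m i j = 0 whenever i ≠ j and ¬ E i j), if the evaluation of P at the assignment (m,i,j) ↦ A m i j is nonzero, then Algebra.adjoin ℂ (Set.range A) = ⊤. In particular, a generic tuple of matrices whose Burnside graph is the strongly connected graph E generates the full matrix algebra M_n(ℂ). -/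

import Mathlib

/-!
Generating the whole matrix algebra is witnessed by `n²` words in the generators whose values
form a basis, i.e. by the nonvanishing of one determinant. Evaluated on generic matrices supported
on the pattern, that determinant is a polynomial `P` in the allowed entries, and `P ≠ 0` as soon
as a single tuple supported on the pattern generates. Such a tuple is a diagonal matrix `D` with
distinct entries together with the adjacency matrix `B` of `E`: Lagrange interpolation in `D`
gives the diagonal matrix units `e_ii`, then `e_ii B e_jj` is `e_ij` for every edge, and products
along paths give every `e_ij`.
-/

open Matrix Polynomial Module

section WordBasis
variable {K M ι κ : Type*} [Field K] [Ring M] [Algebra K M] [Fintype κ] [DecidableEq κ]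

theorem exists_words_det_ne_zero (b : Basis κ K M) {A : ι → M}
    (hA : Algebra.adjoin K (Set.range A) = ⊤) :
    ∃ w : κ → FreeMonoid ι, b.det (fun s => FreeMonoid.lift A (w s)) ≠ 0 := by
  have hspan : Submodule.span K (Submonoid.closure (Set.range A) : Set M) = ⊤ := by
    rw [← Algebra.adjoin_eq_span, Algebra.toSubmodule_eq_top.mpr hA]
  obtain ⟨t, hts, htspan, hli⟩ :=
    exists_linearIndependent K (Submonoid.closure (Set.range A) : Set M)
  let c₀ : Basis t K M := .mk hli (by rw [Subtype.range_coe, htspan, hspan])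
  let c : Basis κ K M := c₀.reindex (c₀.indexEquiv b)
  have hc : ∀ s, c s ∈ MonoidHom.mrange (FreeMonoid.lift A) := fun s => by
    rw [FreeMonoid.mrange_lift, Basis.reindex_apply, Basis.coe_mk]
    exact hts (Subtype.mem _)
  choose w hw using hc
  refine ⟨w, ?_⟩
  rw [show (fun s => FreeMonoid.lift A (w s)) = c from funext hw]
  exact (b.is_basis_iff_det.mp ⟨c.linearIndependent, c.span_eq⟩).ne_zero

end WordBasis

section IsUnitDet
variable {R M ι κ : Type*} [CommRing R] [Ring M] [Algebra R M] [Fintype κ] [DecidableEq κ]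

theorem adjoin_range_eq_top_of_isUnit_det (b : Basis κ R M) {A : ι → M} {w : κ → FreeMonoid ι}
    (h : IsUnit (b.det fun s => FreeMonoid.lift A (w s))) :
    Algebra.adjoin R (Set.range A) = ⊤ := by
  obtain ⟨-, hspan⟩ := b.is_basis_iff_det.mpr h
  rw [← Algebra.toSubmodule_eq_top, eq_top_iff, ← hspan, Submodule.span_le]
  rintro _ ⟨s, rfl⟩
  have hw : FreeMonoid.lift A (w s) ∈ Submonoid.closure (Set.range A) := by
    rw [← FreeMonoid.mrange_lift]; exact ⟨w s, rfl⟩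
  exact Submonoid.closure_le.mpr (Algebra.subset_adjoin (R := R)) hw

end IsUnitDet

section GenericMatrix
variable {R ι m : Type*} [CommRing R] (S : ι × m × m → Prop) [DecidablePred S]

noncomputable def genericMatrix (a : ι) : Matrix m m (MvPolynomial {x // S x} R) :=
  Matrix.of fun i j => if h : S (a, i, j) then MvPolynomial.X ⟨(a, i, j), h⟩ else 0

def IsSupportedOn (A : ι → Matrix m m R) : Prop :=
  ∀ a i j, ¬ S (a, i, j) → A a i j = 0

variable {S} {A : ι → Matrix m m R}

theorem map_eval_genericMatrix (hA : IsSupportedOn S A) (a : ι) :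
    (genericMatrix S a).map (MvPolynomial.eval fun v => A v.1.1 v.1.2.1 v.1.2.2) = A a := by
  ext i j
  by_cases h : S (a, i, j)
  · simp [genericMatrix, h]
  · simp [genericMatrix, h, hA a i j h]

variable [Fintype m] [DecidableEq m]

theorem map_eval_lift_genericMatrix (hA : IsSupportedOn S A) (w : FreeMonoid ι) :
    (FreeMonoid.lift (genericMatrix S) w).map (MvPolynomial.eval fun v => A v.1.1 v.1.2.1 v.1.2.2)
      = FreeMonoid.lift A w := by
  set φ := MvPolynomial.eval fun v : {x // S x} => A v.1.1 v.1.2.1 v.1.2.2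
  have hG : φ.mapMatrix.toMonoidHom ∘ genericMatrix S = A := funext (map_eval_genericMatrix hA)
  calc _ = FreeMonoid.lift (φ.mapMatrix.toMonoidHom ∘ genericMatrix S) w := by
        rw [← FreeMonoid.comp_lift]; rfl
    _ = _ := by rw [hG]

theorem eval_det_lift_genericMatrix (hA : IsSupportedOn S A)
    (w : m × m → FreeMonoid ι) :
    MvPolynomial.eval (fun v => A v.1.1 v.1.2.1 v.1.2.2)
        (Matrix.of fun p s => FreeMonoid.lift (genericMatrix S) (w s) p.1 p.2).det
      = (Matrix.stdBasis R m m).det fun s => FreeMonoid.lift A (w s) := by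
  rw [RingHom.map_det, Basis.det_apply]
  congr 1
  ext p s
  simp [Basis.toMatrix_apply, Matrix.stdBasis, ← map_eval_lift_genericMatrix hA (w s)]

theorem exists_mvPolynomial_ne_zero_adjoin_eq_top_of_eval_ne_zero {K : Type*} [Field K]
    {A₀ : ι → Matrix m m K} (h₀supp : IsSupportedOn S A₀)
    (h₀gen : Algebra.adjoin K (Set.range A₀) = ⊤) :
    ∃ P : MvPolynomial {x // S x} K, P ≠ 0 ∧ ∀ A : ι → Matrix m m K,
      IsSupportedOn S A →
      MvPolynomial.eval (fun v => A v.1.1 v.1.2.1 v.1.2.2) P ≠ 0 →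
      Algebra.adjoin K (Set.range A) = ⊤ := by
  obtain ⟨w, hw⟩ := exists_words_det_ne_zero (stdBasis K m m) h₀gen
  refine ⟨(of fun p s => FreeMonoid.lift (genericMatrix S) (w s) p.1 p.2).det, ?_, ?_⟩
  · intro hP
    apply hw
    rw [← eval_det_lift_genericMatrix h₀supp, hP, map_zero]
  · intro A hA hP
    rw [eval_det_lift_genericMatrix hA] at hP
    exact adjoin_range_eq_top_of_isUnit_det _ (isUnit_iff_ne_zero.mpr hP)

end GenericMatrix

section MatrixUnits
variable {K m : Type*} [Field K] [Fintype m] [DecidableEq m] {T : Subalgebra K (Matrix m m K)}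

theorem aeval_diagonal (d : m → K) (p : K[X]) :
    aeval (diagonal d) p = diagonal fun i => p.eval (d i) := by
  rw [← diagonalAlgHom_apply (R := K), aeval_algHom_apply, aeval_pi_apply, diagonalAlgHom_apply]
  simp only [coe_aeval_eq_eval]

theorem single_one_mem_of_diagonal_mem {d : m → K} (hd : Function.Injective d)
    (hT : diagonal d ∈ T) (i : m) : single i i (1 : K) ∈ T := by
  have key : aeval (diagonal d) (Lagrange.basis Finset.univ d i) = single i i 1 := by
    rw [aeval_diagonal, ← diagonal_single]
    congr 1
    funext j
    rcases eq_or_ne i j with rfl | hij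
    · simp [Lagrange.eval_basis_self hd.injOn (Finset.mem_univ i)]
    · simp [Lagrange.eval_basis_of_ne hij (Finset.mem_univ j), hij]
  rw [← key]
  exact Algebra.adjoin_singleton_le hT (aeval_mem_adjoin_singleton K _)

theorem single_one_mem_of_mem (hdiag : ∀ i, single i i (1 : K) ∈ T) {M : Matrix m m K}
    (hM : M ∈ T) {i j : m} (hij : M i j ≠ 0) : single i j (1 : K) ∈ T := by
  have h : (M i j)⁻¹ • (single i i 1 * M * single j j 1) = single i j (1 : K) := by
    rw [single_mul_mul_single, smul_single, one_mul, mul_one, smul_eq_mul, inv_mul_cancel₀ hij]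
  rw [← h]
  exact T.smul_mem (T.mul_mem (T.mul_mem (hdiag i) hM) (hdiag j)) _

theorem eq_top_of_single_one_mem {E : m → m → Prop} (hdiag : ∀ i, single i i (1 : K) ∈ T)
    (hE : ∀ i j, E i j → single i j (1 : K) ∈ T) (hconn : ∀ i j, Relation.ReflTransGen E i j) :
    T = ⊤ := by
  have hall : ∀ i j, single i j (1 : K) ∈ T := fun i j => by
    induction hconn i j with
    | refl => exact hdiag i
    | tail _ hbc ih => simpa using T.mul_mem ih (hE _ _ hbc)
  rw [← Algebra.toSubmodule_eq_top, eq_top_iff, ← (stdBasis K m m).span_eq, Submodule.span_le]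
  rintro _ ⟨⟨i, j⟩, rfl⟩
  rw [stdBasis_eq_single]
  exact hall i j

theorem adjoin_diagonal_adjacency_eq_top {E : m → m → Prop} [DecidableRel E] {d : m → K}
    (hd : Function.Injective d) (hconn : ∀ i j, Relation.ReflTransGen E i j) :
    Algebra.adjoin K {diagonal d, of fun i j => if E i j then 1 else 0} = ⊤ := by
  set T := Algebra.adjoin K {diagonal d, of fun i j => if E i j then (1 : K) else 0}
  have hdiag := single_one_mem_of_diagonal_mem hd (T := T) (Algebra.subset_adjoin (by simp))
  refine eq_top_of_single_one_mem hdiag (fun i j hij => ?_) hconn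
  exact single_one_mem_of_mem hdiag (M := of fun i j => if E i j then (1 : K) else 0)
    (Algebra.subset_adjoin (by simp)) (by simp [hij])

end MatrixUnits

theorem generic_strongly_connected_generates_full_algebra_general
    (n k : ℕ) (hk : 1 < k)
    (E : Fin n → Fin n → Prop)
    (hconn : ∀ i j : Fin n, Relation.ReflTransGen E i j) :
    ∃ P : MvPolynomial {x : Fin k × Fin n × Fin n // x.2.1 = x.2.2 ∨ E x.2.1 x.2.2} ℂ,
      P ≠ 0 ∧
      ∀ A : Fin k → Matrix (Fin n) (Fin n) ℂ,
        (∀ (m : Fin k) (i j : Fin n), i ≠ j → ¬ E i j → A m i j = 0) →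
        MvPolynomial.eval (fun v => A v.1.1 v.1.2.1 v.1.2.2) P ≠ 0 →
        Algebra.adjoin ℂ (Set.range A) = ⊤ := by
  classical
  let A₀ : Fin k → Matrix (Fin n) (Fin n) ℂ := fun a =>
    if (a : ℕ) = 0 then diagonal fun i => ((i : ℕ) : ℂ) else of fun i j => if E i j then 1 else 0
  have h₀supp : IsSupportedOn (fun x : Fin k × Fin n × Fin n => x.2.1 = x.2.2 ∨ E x.2.1 x.2.2)
      A₀ := fun a i j hij => by
    obtain ⟨hne, hE⟩ := not_or.mp hij
    by_cases ha : (a : ℕ) = 0 <;> simp [A₀, ha, hne, hE]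
  have h₀gen : Algebra.adjoin ℂ (Set.range A₀) = ⊤ := by
    have hd : Function.Injective fun i : Fin n => ((i : ℕ) : ℂ) :=
      fun i j h => Fin.ext (Nat.cast_injective h)
    refine top_unique ((adjoin_diagonal_adjacency_eq_top hd hconn).ge.trans
      (Algebra.adjoin_mono ?_))
    rintro _ (rfl | rfl)
    · exact ⟨⟨0, by omega⟩, by simp [A₀]⟩
    · exact ⟨⟨1, hk⟩, by simp [A₀]⟩
  obtain ⟨P, hP, hgen⟩ := exists_mvPolynomial_ne_zero_adjoin_eq_top_of_eval_ne_zero h₀supp h₀gen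
  exact ⟨P, hP, fun A hA => hgen A fun a i j hij => hA a i j (not_or.mp hij).1 (not_or.mp hij).2⟩

/-- A generic tuple of complex matrices whose Burnside graph is a given
strongly connected graph `E` generates the full matrix algebra: there is a
nonzero polynomial `P` in the allowed entries whose nonvanishing at a tuple
supported on the pattern `E` guarantees generation of `M_n(ℂ)`. -/
theorem generic_strongly_connected_generates_full_algebra
    (n k : ℕ) (hn : 1 < n) (hk : 1 < k)
    (E : Fin n → Fin n → Prop) (hirr : ∀ i, ¬ E i i)
    (hconn : ∀ i j : Fin n, Relation.ReflTransGen E i j) :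
    ∃ P : MvPolynomial {x : Fin k × Fin n × Fin n // x.2.1 = x.2.2 ∨ E x.2.1 x.2.2} ℂ,
      P ≠ 0 ∧
      ∀ A : Fin k → Matrix (Fin n) (Fin n) ℂ,
        (∀ (m : Fin k) (i j : Fin n), i ≠ j → ¬ E i j → A m i j = 0) →
        MvPolynomial.eval (fun v => A v.1.1 v.1.2.1 v.1.2.2) P ≠ 0 →
        Algebra.adjoin ℂ (Set.range A) = ⊤ :=
  generic_strongly_connected_generates_full_algebra_general n k hk E hconn
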